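/- Let ξ < −1/8 and let φ ∈ (0, π/6) satisfy |ξ| · ( 2√((2cos(2φ)+2)(2cos(2φ)−1)) + 2cos(2φ) + 2 ) > 1. Then the constant c₀ = |ξ| − 1/( 2√((2cos(2φ)+2)(2cos(2φ)−1)) + 2cos(2φ) + 2 ) is positive, and for every complex number z = l·e^{iφ'} with l > 0 and φ' ∈ (0, φ] ∪ [π − φ, π], one has Im θ_ξ(z) ≤ −√3 · c₀ · Im z. -/

import Mathlib

/-- The complex phase function `θ_ξ(z) = √3 (z − 1/z)(ξ − 1/(z² − 1 + z⁻²))`. -/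
noncomputable def phaseθ (ξ : ℝ) (z : ℂ) : ℂ :=
  (Real.sqrt 3 : ℂ) * (z - 1 / z) * ((ξ : ℂ) - 1 / (z ^ 2 - 1 + (1 / z) ^ 2))

private lemma key_ineq (c s D a x : ℝ) (hs : 0 ≤ s) (hs2 : s^2 = (2*c+2)*(2*c-1))
    (hD : D = 2*s+2*c+2) (hc : 1/2 < c) (hx : c ≤ x) :
    D*(a-2*x-1) ≤ (a*x-1)^2 + (a^2-4)*(1-x^2) := by
  rcases le_or_gt (2*a) (4*x+4*c+2*D) with h | h
  · nlinarith [sq_nonneg (2*a - 2*c - D), mul_nonneg (sub_nonneg.2 hx) (sub_nonneg.2 h),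
      sq_nonneg (x-c)]
  · have ha4 : 4*c + D ≤ a := by nlinarith
    have hD0 : 0 < D := by nlinarith
    nlinarith [sq_nonneg (4*x - a + D),
      mul_nonneg (sub_nonneg.2 ha4) (by nlinarith : (0:ℝ) ≤ 3*(a + 4*c + D) - 2*D),
      sq_nonneg (2*c-1)]

private lemma im_formula (ξ : ℝ) (u : ℂ) (h : u^2 + 1 ≠ 0) :
    ((Real.sqrt 3 : ℂ) * u * ((ξ:ℂ) - 1/(u^2+1))).im =
    Real.sqrt 3 * (ξ * u.im - u.im * (1 - u.re^2 - u.im^2) / Complex.normSq (u^2+1)) := by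
  have hN : Complex.normSq (u^2+1) ≠ 0 := by simpa [Complex.normSq_eq_zero] using h
  simp [Complex.mul_im, Complex.mul_re, Complex.div_im, Complex.div_re,
    Complex.normSq_apply, pow_two]
  field_simp
  ring

set_option maxHeartbeats 2000000 in
/-- For `ξ < −1/8` and an opening angle `0 < φ < π/6` with
`|ξ| (2√((2cos2φ+2)(2cos2φ−1)) + 2cos2φ + 2) > 1`, the constant
`c₀ = |ξ| − 1/(2√((2cos2φ+2)(2cos2φ−1)) + 2cos2φ + 2)` is positive and, for every
`z = l e^{iφ'}` with `l > 0` and `φ' ∈ (0, φ] ∪ [π − φ, π]`, one has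
`Im θ_ξ(z) ≤ −√3 c₀ Im z`. -/
theorem stmt_7 (ξ φ : ℝ) (hξ : ξ < -(1 / 8)) (hφ1 : 0 < φ) (hφ2 : φ < Real.pi / 6)
    (hcos : 1 < |ξ| * (2 * Real.sqrt ((2 * Real.cos (2 * φ) + 2) * (2 * Real.cos (2 * φ) - 1))
              + 2 * Real.cos (2 * φ) + 2)) :
    0 < |ξ| - 1 / (2 * Real.sqrt ((2 * Real.cos (2 * φ) + 2) * (2 * Real.cos (2 * φ) - 1))
              + 2 * Real.cos (2 * φ) + 2) ∧
    ∀ l φ' : ℝ, 0 < l →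
      ((0 < φ' ∧ φ' ≤ φ) ∨ (Real.pi - φ ≤ φ' ∧ φ' ≤ Real.pi)) →
      (phaseθ ξ ((l : ℂ) * Complex.exp (φ' * Complex.I))).im
        ≤ -(Real.sqrt 3 *
            (|ξ| - 1 / (2 * Real.sqrt ((2 * Real.cos (2 * φ) + 2) * (2 * Real.cos (2 * φ) - 1))
                + 2 * Real.cos (2 * φ) + 2)) *
            ((l : ℂ) * Complex.exp (φ' * Complex.I)).im) := by
  have hπ := Real.pi_pos
  set c : ℝ := Real.cos (2 * φ) with hc_def
  set s : ℝ := Real.sqrt ((2 * c + 2) * (2 * c - 1)) with hs_def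
  set D : ℝ := 2 * s + 2 * c + 2 with hD_def
  -- c > 1/2
  have hc : 1/2 < c := by
    rw [hc_def, ← Real.cos_pi_div_three]
    exact Real.cos_lt_cos_of_nonneg_of_le_pi (by linarith) (by linarith) (by linarith)
  have hc1 : c ≤ 1 := by rw [hc_def]; exact Real.cos_le_one _
  have hs0 : 0 ≤ s := by rw [hs_def]; exact Real.sqrt_nonneg _
  have hs2 : s^2 = (2*c+2)*(2*c-1) := by rw [hs_def]; exact Real.sq_sqrt (by nlinarith)
  clear_value c s
  have hD0 : 0 < D := by rw [hD_def]; linarith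
  clear_value D
  have hξ0 : ξ < 0 := by linarith
  have habs : |ξ| = -ξ := abs_of_neg hξ0
  have hED : 1 / D < |ξ| := (div_lt_iff₀ hD0).mpr hcos
  refine ⟨by linarith, ?_⟩
  intro l φ' hl hmem
  set E : ℝ := 1 / D with hE_def
  have hE0 : 0 < E := by rw [hE_def]; positivity
  have hED1 : E * D = 1 := by rw [hE_def]; field_simp
  clear_value E
  set Cp : ℝ := Real.cos φ' with hCp_def
  set S : ℝ := Real.sin φ' with hS_def
  set x : ℝ := Real.cos (2 * φ') with hx_def
  have hS0 : 0 ≤ S := by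
    rw [hS_def]
    rcases hmem with ⟨h1, h2⟩ | ⟨h1, h2⟩
    · exact Real.sin_nonneg_of_nonneg_of_le_pi h1.le (by linarith)
    · exact Real.sin_nonneg_of_nonneg_of_le_pi (by linarith) h2
  have hx : c ≤ x := by
    rw [hc_def, hx_def]
    rcases hmem with ⟨h1, h2⟩ | ⟨h1, h2⟩
    · exact Real.cos_le_cos_of_nonneg_of_le_pi (by linarith) (by linarith) (by linarith)
    · have e1 : Real.cos (2*φ') = Real.cos (2*Real.pi - 2*φ') := by
        rw [Real.cos_sub, Real.cos_two_pi, Real.sin_two_pi]; ring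
      rw [e1]
      exact Real.cos_le_cos_of_nonneg_of_le_pi (by linarith) (by linarith) (by linarith)
  have hx1 : x ≤ 1 := by rw [hx_def]; exact Real.cos_le_one _
  have hC2 : Cp^2 = (1+x)/2 := by
    have h := Real.cos_two_mul φ'
    rw [← hx_def, ← hCp_def] at h; linarith
  have hPyth : S^2 + Cp^2 = 1 := by
    rw [hS_def, hCp_def]; exact Real.sin_sq_add_cos_sq φ'
  have hS2 : S^2 = (1-x)/2 := by linarith
  -- the point z
  set z : ℂ := (l : ℂ) * Complex.exp (φ' * Complex.I) with hz_def
  have hzre : z.re = l * Cp := by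
    simp [hz_def, Complex.mul_re, Complex.exp_ofReal_mul_I_re, Complex.exp_ofReal_mul_I_im,
      hCp_def]
  have hzim : z.im = l * S := by
    simp [hz_def, Complex.mul_im, Complex.exp_ofReal_mul_I_re, Complex.exp_ofReal_mul_I_im,
      hS_def]
  have hz0 : z ≠ 0 := by
    rw [hz_def]
    exact mul_ne_zero (Complex.ofReal_ne_zero.2 hl.ne') (Complex.exp_ne_zero _)
  clear_value Cp S x z
  have hzn : Complex.normSq z = l^2 := by
    rw [Complex.normSq_apply, hzre, hzim]; linear_combination (l^2)*hPyth
  set m : ℝ := 1/l with hm_def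
  have hm0 : 0 < m := by rw [hm_def]; positivity
  have hlm : l * m = 1 := by rw [hm_def]; field_simp
  clear_value m
  set u : ℂ := z - 1/z with hu_def
  have hur : u.re = Cp * (l - m) := by
    rw [hu_def]
    simp only [Complex.sub_re, one_div, Complex.inv_re, hzn, hzre]
    field_simp
    linear_combination Cp*hlm
  have hui : u.im = S * (l + m) := by
    rw [hu_def]
    simp only [Complex.sub_im, one_div, Complex.inv_im, hzn, hzim]
    field_simp
    linear_combination (-S)*hlm
  clear_value u
  set A : ℝ := l^2 + m^2 with hA_def
  clear_value A
  have hA2 : 2 ≤ A := by rw [hA_def]; linarith [sq_nonneg (l - m), hlm]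
  have hwre : (u^2+1).re = x*A - 1 := by
    have e : (u^2+1).re = u.re^2 - u.im^2 + 1 := by
      simp [pow_two, Complex.add_re, Complex.mul_re]
    rw [e, hur, hui, hA_def]
    linear_combination ((l-m)^2)*hC2 - ((l+m)^2)*hS2 - (2:ℝ)*hlm
  have hwim : (u^2+1).im = 2*(Cp*(l-m))*(S*(l+m)) := by
    have e : (u^2+1).im = 2*u.re*u.im := by
      simp [pow_two, Complex.add_im, Complex.mul_im]; ring
    rw [e, hur, hui]
  set W : ℝ := Complex.normSq (u^2+1) with hW_def
  have hW : W = (A*x-1)^2 + (A^2-4)*(1-x^2) := by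
    rw [hW_def, Complex.normSq_apply, hwre, hwim, hA_def]
    linear_combination (4*(l-m)^2*(l+m)^2*S^2)*hC2 + (2*(l-m)^2*(l+m)^2*(1+x))*hS2
      - (4*(1-x^2)*(l*m+1))*hlm
  have hW0 : 0 < W := by
    rw [hW]
    have h2 : (0:ℝ) ≤ (A-2)*(A+2) := mul_nonneg (by linarith) (by linarith)
    have h3 : (0:ℝ) ≤ (1-x)*(1+x) := mul_nonneg (by linarith) (by linarith)
    have h4 : (0:ℝ) ≤ ((A-2)*(A+2))*((1-x)*(1+x)) := mul_nonneg h2 h3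
    have h5 : 2*x ≤ A*x := by
      have := mul_le_mul_of_nonneg_right hA2 (by linarith : (0:ℝ) ≤ x); linarith
    have h6 : (0:ℝ) < A*x - 1 := by linarith
    have h7 : (0:ℝ) < (A*x-1)*(A*x-1) := mul_pos h6 h6
    linarith [h4, h7]
  have hw0 : u^2 + 1 ≠ 0 := by
    intro h
    rw [hW_def, h] at hW0; simp at hW0
  -- rewrite the phase
  have hphase : phaseθ ξ z = (Real.sqrt 3 : ℂ) * u * ((ξ:ℂ) - 1/(u^2+1)) := by
    rw [phaseθ, hu_def]
    have e : z ^ 2 - 1 + (1 / z) ^ 2 = (z - 1/z)^2 + 1 := by field_simp; ring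
    rw [e]
  have hri : u.re^2 + u.im^2 = A - 2*x := by
    rw [hur, hui, hA_def]
    linear_combination ((l-m)^2)*hC2 + ((l+m)^2)*hS2 - (2*x)*hlm
  -- key inequality
  have hkey : D*(A-2*x-1) ≤ W := by
    rw [hW]; exact key_ineq c s D A x hs0 hs2 hD_def hc hx
  have hkey2 : A - 2*x - 1 ≤ E*W := by
    have h := mul_le_mul_of_nonneg_left hkey hE0.le
    have h2 : E*(D*(A-2*x-1)) = A-2*x-1 := by linear_combination (A-2*x-1)*hED1
    linarith [h, h2]
  -- the inner real inequality
  have hinner : ξ * u.im - u.im * (1 - u.re^2 - u.im^2) / W ≤ -((|ξ| - E) * (l * S)) := by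
    have e1 : ξ * u.im - u.im * (1 - u.re^2 - u.im^2) / W
        = (ξ * u.im * W - u.im * (1 - u.re^2 - u.im^2)) / W := by
      field_simp
    rw [habs, e1, div_le_iff₀ hW0]
    have h1 : (l+m)*S*(A-2*x-1) ≤ (l+m)*S*(E*W) :=
      mul_le_mul_of_nonneg_left hkey2 (by positivity)
    have h2 : 0 ≤ (-ξ - E) * (m*S*W) :=
      mul_nonneg (by linarith) (by positivity)
    have e2 : 1 - u.re^2 - u.im^2 = 1 - (A - 2*x) := by rw [← hri]; ring
    rw [e2, hui]
    linarith [h1, h2]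
  -- conclude
  rw [hphase, im_formula ξ u hw0, ← hW_def, hzim]
  have h3 : (0:ℝ) ≤ Real.sqrt 3 := Real.sqrt_nonneg 3
  calc Real.sqrt 3 * (ξ * u.im - u.im * (1 - u.re^2 - u.im^2) / W)
      ≤ Real.sqrt 3 * (-((|ξ| - E) * (l * S))) := mul_le_mul_of_nonneg_left hinner h3
    _ = -(Real.sqrt 3 * (|ξ| - E) * (l * S)) := by ring
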